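/- Let Ω ⊆ ℝ² be open, let λ : ℝ² → ℂ be differentiable at p ∈ Ω with (λ_x + λ·λ_y)(p) = 0 and Φ(p) ≠ 0, and let ξ(x,y) := y − λ(x,y)·x. Let A, B, F : ℝ² → ℂ be functions, let G : ℂ → ℂ be real-differentiable at ξ(p), and set f := G ∘ ξ. If f satisfies the rigid Vekua equation f_x + λ·f_y + 2·A·f + 2·B·conj(f) = 2·F at p, then G satisfies the standard Vekua equation (∂̄G)(ξ(p)) + (2A(p)/Φ(p))·G(ξ(p)) + (2B(p)/Φ(p))·conj(G(ξ(p))) = 2F(p)/Φ(p). -/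
import Mathlib


open Complex

private lemma wsplit (u v w : ℂ) :
    (w.re : ℂ) * u + (w.im : ℂ) * v
      = ((u - I*v)/2) * w + ((u + I*v)/2) * (starRingEnd ℂ) w := by
  have h1 : w + (starRingEnd ℂ) w = 2 * w.re := by push_cast [Complex.add_conj]; ring
  have h2 : w - (starRingEnd ℂ) w = 2 * w.im * I := by push_cast [Complex.sub_conj]; ring
  have hI : (I:ℂ) * I = -1 := Complex.I_mul_I
  linear_combination (-(u/2))*h1 + (I*v/2)*h2 + ((w.im:ℂ)*v)*hI


noncomputable def pdx (f : ℝ × ℝ → ℂ) (p : ℝ × ℝ) : ℂ := fderiv ℝ f p (1, 0)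
noncomputable def pdy (f : ℝ × ℝ → ℂ) (p : ℝ × ℝ) : ℂ := fderiv ℝ f p (0, 1)

/-- The canonical coordinate `ξ(x,y) = y − λ(x,y)·x`. -/
noncomputable def xiC (lam : ℝ × ℝ → ℂ) (p : ℝ × ℝ) : ℂ := (p.2 : ℂ) - lam p * (p.1 : ℂ)

/-- The characteristic Jacobian. -/
noncomputable def Phi (lam : ℝ × ℝ → ℂ) (p : ℝ × ℝ) : ℂ :=
  (lam p - (starRingEnd ℂ) (lam p))
    - (p.1 : ℂ) * ((starRingEnd ℂ) (pdx lam p) + lam p * (starRingEnd ℂ) (pdy lam p))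

/-- Wirtinger derivative `∂̄G(w) := ½(DG(w)(1) + i·DG(w)(i))`. -/
noncomputable def dbar (G : ℂ → ℂ) (w : ℂ) : ℂ :=
  (fderiv ℝ G w 1 + I * fderiv ℝ G w I) / 2

/-- Reduction of the rigid Vekua equation to a standard Vekua equation in the
canonical coordinate. -/
theorem stmt17
    (Ω : Set (ℝ × ℝ)) (hΩ : IsOpen Ω)
    (lam : ℝ × ℝ → ℂ) (p : ℝ × ℝ) (hp : p ∈ Ω)
    (hlam : DifferentiableAt ℝ lam p)
    (hrigid : pdx lam p + lam p * pdy lam p = 0)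
    (hΦ : Phi lam p ≠ 0)
    (A B F : ℝ × ℝ → ℂ)
    (G : ℂ → ℂ) (hG : DifferentiableAt ℝ G (xiC lam p))
    (hvekua : pdx (G ∘ xiC lam) p + lam p * pdy (G ∘ xiC lam) p
        + 2 * A p * (G ∘ xiC lam) p
        + 2 * B p * (starRingEnd ℂ) ((G ∘ xiC lam) p) = 2 * F p) :
    dbar G (xiC lam p)
      + (2 * A p / Phi lam p) * G (xiC lam p)
      + (2 * B p / Phi lam p) * (starRingEnd ℂ) (G (xiC lam p))
      = 2 * F p / Phi lam p := by
  classical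
  set L := fderiv ℝ G (xiC lam p) with hLdef
  have hx1 : HasFDerivAt (fun q : ℝ × ℝ => (q.1 : ℂ))
      (Complex.ofRealCLM.comp (ContinuousLinearMap.fst ℝ ℝ ℝ)) p :=
    Complex.ofRealCLM.hasFDerivAt.comp p hasFDerivAt_fst
  have hx2 : HasFDerivAt (fun q : ℝ × ℝ => (q.2 : ℂ))
      (Complex.ofRealCLM.comp (ContinuousLinearMap.snd ℝ ℝ ℝ)) p :=
    Complex.ofRealCLM.hasFDerivAt.comp p hasFDerivAt_snd
  have hξ : HasFDerivAt (xiC lam)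
      (Complex.ofRealCLM.comp (ContinuousLinearMap.snd ℝ ℝ ℝ)
        - (lam p • (Complex.ofRealCLM.comp (ContinuousLinearMap.fst ℝ ℝ ℝ))
            + (p.1 : ℂ) • fderiv ℝ lam p)) p := by
    exact hx2.sub ((hlam.hasFDerivAt).mul hx1)
  have hf : HasFDerivAt (G ∘ xiC lam) (L.comp _) p := (hG.hasFDerivAt).comp p hξ
  have hfd := hf.fderiv
  set Dx := pdx lam p with hDx
  set Dy := pdy lam p with hDy
  set u := L 1 with hu
  set v := L I with hv
  have hLlin : ∀ z : ℂ, L z = (z.re : ℂ) * u + (z.im : ℂ) * v := by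
    intro z
    have hz : z = z.re • (1:ℂ) + z.im • I := by
      simp [Complex.real_smul, Complex.re_add_im]
    calc L z = L (z.re • (1:ℂ) + z.im • I) := by rw [← hz]
    _ = (z.re : ℂ) * u + (z.im : ℂ) * v := by
        rw [map_add, map_smul, map_smul, Complex.real_smul, Complex.real_smul]
  -- the two partial derivatives of ξ
  have e1 : pdx (G ∘ xiC lam) p = L (-(lam p + (p.1:ℂ) * Dx)) := by
    rw [pdx, hfd]
    simp [hDx, pdx, Complex.real_smul]
  have e2 : pdy (G ∘ xiC lam) p = L (1 - (p.1:ℂ) * Dy) := by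
    rw [pdy, hfd]
    simp [hDy, pdy, Complex.real_smul]
  have hdb : dbar G (xiC lam p) = (u + I*v)/2 := rfl
  have hcx : (starRingEnd ℂ) (-(lam p + (p.1:ℂ) * Dx))
      = -((starRingEnd ℂ) (lam p) + (p.1:ℂ) * (starRingEnd ℂ) Dx) := by
    simp [map_add, map_mul, Complex.conj_ofReal]
  have hcy : (starRingEnd ℂ) (1 - (p.1:ℂ) * Dy)
      = 1 - (p.1:ℂ) * (starRingEnd ℂ) Dy := by
    simp [map_sub, map_mul, Complex.conj_ofReal]
  have key : pdx (G ∘ xiC lam) p + lam p * pdy (G ∘ xiC lam) p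
      = dbar G (xiC lam p) * Phi lam p := by
    rw [e1, e2, hLlin, hLlin, hdb, wsplit, wsplit, hcx, hcy, Phi, ← hDx, ← hDy]
    linear_combination (((u - I*v)/2) * (-(p.1:ℂ))) * hrigid
  simp only [Function.comp_apply] at hvekua
  have h2 : dbar G (xiC lam p) * Phi lam p + 2 * A p * G (xiC lam p)
      + 2 * B p * (starRingEnd ℂ) (G (xiC lam p)) = 2 * F p := by
    linear_combination hvekua - key
  field_simp
  linear_combination h2
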